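/- arXiv:1701.05063 — 6 statements merged into one kernel-verified Lean document; each statement's English description precedes it below -/
import Mathlib

section
/- In Hybrid Linear Logic (HyLL), the cut rule for the linear context is admissible: if Γ; Δ ⊢ A @ u and Γ; Δ′, A @ u ⊢ C @ w are derivable, then Γ; Δ, Δ′ ⊢ C @ w is derivable (where Δ, Δ′ denotes multiset union of the linear contexts). -/
/-!
Hybrid Linear Logic (HyLL): intuitionistic first-order linear logic with
judgments `A @ w` where worlds `w` are drawn from a constraint domain,
i.e. a monoid `⟨W, ·, ι⟩`.  World binders (`↓`, world quantifiers) and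
first-order term quantifiers are represented in weak HOAS style.
-/

/-- HyLL formulas over worlds `W`, first-order terms `T` and
atomic predicate symbols `Atom`. -/
inductive HFormula (W T Atom : Type) : Type where
  | atom   : Atom → List T → HFormula W T Atom                      -- p(t⃗)
  | tensor : HFormula W T Atom → HFormula W T Atom → HFormula W T Atom  -- ⊗
  | one    : HFormula W T Atom                                      -- 1
  | limp   : HFormula W T Atom → HFormula W T Atom → HFormula W T Atom  -- ⊸
  | with'  : HFormula W T Atom → HFormula W T Atom → HFormula W T Atom  -- &
  | top    : HFormula W T Atom                                      -- ⊤
  | oplus  : HFormula W T Atom → HFormula W T Atom → HFormula W T Atom  -- ⊕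
  | zero   : HFormula W T Atom                                      -- 0
  | bang   : HFormula W T Atom → HFormula W T Atom                  -- !
  | fall   : (T → HFormula W T Atom) → HFormula W T Atom            -- ∀x.A
  | fex    : (T → HFormula W T Atom) → HFormula W T Atom            -- ∃x.A
  | at'    : HFormula W T Atom → W → HFormula W T Atom              -- (A at w)
  | down   : (W → HFormula W T Atom) → HFormula W T Atom            -- ↓u.A
  | wall   : (W → HFormula W T Atom) → HFormula W T Atom            -- ∀u.A (worlds)
  | wex    : (W → HFormula W T Atom) → HFormula W T Atom            -- ∃u.A (worlds)

/-- A HyLL judgment `A @ w` is a pair of a formula and a world expression. -/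
abbrev HJudg (W T Atom : Type) := HFormula W T Atom × W

/-- HyLL sequent calculus: `HDeriv Γ Δ C` means `Γ; Δ ⊢ C` is derivable,
where `Γ` is the unbounded context and `Δ` the linear context (a multiset)
and `C` is a judgment `A @ w`.  The initial rule is restricted to atomic
propositions; the rules are those of intuitionistic first-order linear
logic lifted to judgments at worlds, together with the hybrid rules
`at-R`, `at-L`, `↓R`, `↓L` and the world-quantifier rules. -/
inductive HDeriv {W T Atom : Type} :
    Multiset (HJudg W T Atom) → Multiset (HJudg W T Atom) → HJudg W T Atom → Prop where
  | init (Γ : Multiset (HJudg W T Atom)) (a : Atom) (ts : List T) (w : W) :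
      HDeriv Γ {(.atom a ts, w)} (.atom a ts, w)
  | copy {Γ Δ C} {A : HFormula W T Atom} {u : W} :
      (A, u) ∈ Γ → HDeriv Γ ((A, u) ::ₘ Δ) C → HDeriv Γ Δ C
  | tensorR {Γ Δ₁ Δ₂} {A B : HFormula W T Atom} {w : W} :
      HDeriv Γ Δ₁ (A, w) → HDeriv Γ Δ₂ (B, w) → HDeriv Γ (Δ₁ + Δ₂) (.tensor A B, w)
  | tensorL {Γ Δ C} {A B : HFormula W T Atom} {u : W} :
      HDeriv Γ ((A, u) ::ₘ (B, u) ::ₘ Δ) C → HDeriv Γ ((.tensor A B, u) ::ₘ Δ) C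
  | oneR (Γ : Multiset (HJudg W T Atom)) (w : W) : HDeriv Γ 0 (.one, w)
  | oneL {Γ Δ C} {u : W} : HDeriv Γ Δ C → HDeriv Γ ((.one, u) ::ₘ Δ) C
  | limpR {Γ Δ} {A B : HFormula W T Atom} {w : W} :
      HDeriv Γ ((A, w) ::ₘ Δ) (B, w) → HDeriv Γ Δ (.limp A B, w)
  | limpL {Γ Δ₁ Δ₂ C} {A B : HFormula W T Atom} {u : W} :
      HDeriv Γ Δ₁ (A, u) → HDeriv Γ ((B, u) ::ₘ Δ₂) C →
      HDeriv Γ ((.limp A B, u) ::ₘ (Δ₁ + Δ₂)) C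
  | withR {Γ Δ} {A B : HFormula W T Atom} {w : W} :
      HDeriv Γ Δ (A, w) → HDeriv Γ Δ (B, w) → HDeriv Γ Δ (.with' A B, w)
  | withL₁ {Γ Δ C} {A B : HFormula W T Atom} {u : W} :
      HDeriv Γ ((A, u) ::ₘ Δ) C → HDeriv Γ ((.with' A B, u) ::ₘ Δ) C
  | withL₂ {Γ Δ C} {A B : HFormula W T Atom} {u : W} :
      HDeriv Γ ((B, u) ::ₘ Δ) C → HDeriv Γ ((.with' A B, u) ::ₘ Δ) C
  | topR (Γ Δ : Multiset (HJudg W T Atom)) (w : W) : HDeriv Γ Δ (.top, w)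
  | oplusR₁ {Γ Δ} {A B : HFormula W T Atom} {w : W} :
      HDeriv Γ Δ (A, w) → HDeriv Γ Δ (.oplus A B, w)
  | oplusR₂ {Γ Δ} {A B : HFormula W T Atom} {w : W} :
      HDeriv Γ Δ (B, w) → HDeriv Γ Δ (.oplus A B, w)
  | oplusL {Γ Δ C} {A B : HFormula W T Atom} {u : W} :
      HDeriv Γ ((A, u) ::ₘ Δ) C → HDeriv Γ ((B, u) ::ₘ Δ) C →
      HDeriv Γ ((.oplus A B, u) ::ₘ Δ) C
  | zeroL (Γ Δ : Multiset (HJudg W T Atom)) (u : W) (C : HJudg W T Atom) :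
      HDeriv Γ ((.zero, u) ::ₘ Δ) C
  | bangR {Γ} {A : HFormula W T Atom} {w : W} :
      HDeriv Γ 0 (A, w) → HDeriv Γ 0 (.bang A, w)
  | bangL {Γ Δ C} {A : HFormula W T Atom} {u : W} :
      HDeriv ((A, u) ::ₘ Γ) Δ C → HDeriv Γ ((.bang A, u) ::ₘ Δ) C
  | fallR {Γ Δ} {f : T → HFormula W T Atom} {w : W} :
      (∀ t, HDeriv Γ Δ (f t, w)) → HDeriv Γ Δ (.fall f, w)
  | fallL {Γ Δ C} {f : T → HFormula W T Atom} {u : W} (t : T) :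
      HDeriv Γ ((f t, u) ::ₘ Δ) C → HDeriv Γ ((.fall f, u) ::ₘ Δ) C
  | fexR {Γ Δ} {f : T → HFormula W T Atom} {w : W} (t : T) :
      HDeriv Γ Δ (f t, w) → HDeriv Γ Δ (.fex f, w)
  | fexL {Γ Δ C} {f : T → HFormula W T Atom} {u : W} :
      (∀ t, HDeriv Γ ((f t, u) ::ₘ Δ) C) → HDeriv Γ ((.fex f, u) ::ₘ Δ) C
  | atR {Γ Δ} {A : HFormula W T Atom} {u w : W} :
      HDeriv Γ Δ (A, u) → HDeriv Γ Δ (.at' A u, w)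
  | atL {Γ Δ C} {A : HFormula W T Atom} {u v : W} :
      HDeriv Γ ((A, u) ::ₘ Δ) C → HDeriv Γ ((.at' A u, v) ::ₘ Δ) C
  | downR {Γ Δ} {f : W → HFormula W T Atom} {w : W} :
      HDeriv Γ Δ (f w, w) → HDeriv Γ Δ (.down f, w)
  | downL {Γ Δ C} {f : W → HFormula W T Atom} {v : W} :
      HDeriv Γ ((f v, v) ::ₘ Δ) C → HDeriv Γ ((.down f, v) ::ₘ Δ) C
  | wallR {Γ Δ} {f : W → HFormula W T Atom} {w : W} :
      (∀ v, HDeriv Γ Δ (f v, w)) → HDeriv Γ Δ (.wall f, w)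
  | wallL {Γ Δ C} {f : W → HFormula W T Atom} {u : W} (v : W) :
      HDeriv Γ ((f v, u) ::ₘ Δ) C → HDeriv Γ ((.wall f, u) ::ₘ Δ) C
  | wexR {Γ Δ} {f : W → HFormula W T Atom} {w : W} (v : W) :
      HDeriv Γ Δ (f v, w) → HDeriv Γ Δ (.wex f, w)
  | wexL {Γ Δ C} {f : W → HFormula W T Atom} {u : W} :
      (∀ v, HDeriv Γ ((f v, u) ::ₘ Δ) C) → HDeriv Γ ((.wex f, u) ::ₘ Δ) C

namespace HyllCut

variable {W T Atom : Type}




private lemma cons_rot {α : Type*} (a b c : α) (s : Multiset α) :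
    a ::ₘ b ::ₘ c ::ₘ s = c ::ₘ a ::ₘ b ::ₘ s := by
  rw [Multiset.cons_swap b c, Multiset.cons_swap a c]

/-- Weakening of the unbounded context. -/
lemma weaken : ∀ {Γ Δ C}, HDeriv (W := W) (T := T) (Atom := Atom) Γ Δ C →
    ∀ {Γ'}, Γ ≤ Γ' → HDeriv Γ' Δ C := by
  intro Γ Δ C h
  induction h with
  | init Γ a ts w => exact fun _ => .init ..
  | copy hmem _ ih => exact fun hle => .copy (Multiset.mem_of_le hle hmem) (ih hle)
  | tensorR _ _ ih1 ih2 => exact fun hle => .tensorR (ih1 hle) (ih2 hle)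
  | tensorL _ ih => exact fun hle => .tensorL (ih hle)
  | oneR Γ w => exact fun _ => .oneR ..
  | oneL _ ih => exact fun hle => .oneL (ih hle)
  | limpR _ ih => exact fun hle => .limpR (ih hle)
  | limpL _ _ ih1 ih2 => exact fun hle => .limpL (ih1 hle) (ih2 hle)
  | withR _ _ ih1 ih2 => exact fun hle => .withR (ih1 hle) (ih2 hle)
  | withL₁ _ ih => exact fun hle => .withL₁ (ih hle)
  | withL₂ _ ih => exact fun hle => .withL₂ (ih hle)
  | topR => exact fun _ => .topR ..
  | oplusR₁ _ ih => exact fun hle => .oplusR₁ (ih hle)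
  | oplusR₂ _ ih => exact fun hle => .oplusR₂ (ih hle)
  | oplusL _ _ ih1 ih2 => exact fun hle => .oplusL (ih1 hle) (ih2 hle)
  | zeroL => exact fun _ => .zeroL ..
  | bangR _ ih => exact fun hle => .bangR (ih hle)
  | bangL _ ih => exact fun hle => .bangL (ih (Multiset.cons_le_cons _ hle))
  | fallR _ ih => exact fun hle => .fallR (fun t => ih t hle)
  | fallL t _ ih => exact fun hle => .fallL t (ih hle)
  | fexR t _ ih => exact fun hle => .fexR t (ih hle)
  | fexL _ ih => exact fun hle => .fexL (fun t => ih t hle)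
  | atR _ ih => exact fun hle => .atR (ih hle)
  | atL _ ih => exact fun hle => .atL (ih hle)
  | downR _ ih => exact fun hle => .downR (ih hle)
  | downL _ ih => exact fun hle => .downL (ih hle)
  | wallR _ ih => exact fun hle => .wallR (fun v => ih v hle)
  | wallL v _ ih => exact fun hle => .wallL v (ih hle)
  | wexR v _ ih => exact fun hle => .wexR v (ih hle)
  | wexL _ ih => exact fun hle => .wexL (fun v => ih v hle)






/-- Premises of the (unique) left rule whose principal formula is `A @ u`. -/
def LeftPrem (Γ : Multiset (HJudg W T Atom)) :
    HFormula W T Atom → W → Multiset (HJudg W T Atom) → HJudg W T Atom → Prop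
  | .atom a ts, u, Δ', C => Δ' = 0 ∧ C = (.atom a ts, u)
  | .tensor A B, u, Δ', C => HDeriv Γ ((A, u) ::ₘ (B, u) ::ₘ Δ') C
  | .one, _, Δ', C => HDeriv Γ Δ' C
  | .limp A B, u, Δ', C =>
      ∃ Δ₁ Δ₂, Δ' = Δ₁ + Δ₂ ∧ HDeriv Γ Δ₁ (A, u) ∧ HDeriv Γ ((B, u) ::ₘ Δ₂) C
  | .with' A B, u, Δ', C => HDeriv Γ ((A, u) ::ₘ Δ') C ∨ HDeriv Γ ((B, u) ::ₘ Δ') C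
  | .top, _, _, _ => False
  | .oplus A B, u, Δ', C => HDeriv Γ ((A, u) ::ₘ Δ') C ∧ HDeriv Γ ((B, u) ::ₘ Δ') C
  | .zero, _, _, _ => True
  | .bang A, u, Δ', C => HDeriv ((A, u) ::ₘ Γ) Δ' C
  | .fall f, u, Δ', C => ∃ t, HDeriv Γ ((f t, u) ::ₘ Δ') C
  | .fex f, u, Δ', C => ∀ t, HDeriv Γ ((f t, u) ::ₘ Δ') C
  | .at' A v, _, Δ', C => HDeriv Γ ((A, v) ::ₘ Δ') C
  | .down f, u, Δ', C => HDeriv Γ ((f u, u) ::ₘ Δ') C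
  | .wall f, u, Δ', C => ∃ v, HDeriv Γ ((f v, u) ::ₘ Δ') C
  | .wex f, u, Δ', C => ∀ v, HDeriv Γ ((f v, u) ::ₘ Δ') C

/-- Premises of the (unique) right rule deriving `Γ; Δ ⊢ A @ u`. -/
def RightPrem (Γ : Multiset (HJudg W T Atom)) :
    HFormula W T Atom → W → Multiset (HJudg W T Atom) → Prop
  | .atom a ts, u, Δ => Δ = {(.atom a ts, u)}
  | .tensor A B, u, Δ => ∃ Δ₁ Δ₂, Δ = Δ₁ + Δ₂ ∧ HDeriv Γ Δ₁ (A, u) ∧ HDeriv Γ Δ₂ (B, u)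
  | .one, _, Δ => Δ = 0
  | .limp A B, u, Δ => HDeriv Γ ((A, u) ::ₘ Δ) (B, u)
  | .with' A B, u, Δ => HDeriv Γ Δ (A, u) ∧ HDeriv Γ Δ (B, u)
  | .top, _, _ => True
  | .oplus A B, u, Δ => HDeriv Γ Δ (A, u) ∨ HDeriv Γ Δ (B, u)
  | .zero, _, _ => False
  | .bang A, u, Δ => Δ = 0 ∧ HDeriv Γ 0 (A, u)
  | .fall f, u, Δ => ∀ t, HDeriv Γ Δ (f t, u)
  | .fex f, u, Δ => ∃ t, HDeriv Γ Δ (f t, u)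
  | .at' A v, _, Δ => HDeriv Γ Δ (A, v)
  | .down f, u, Δ => HDeriv Γ Δ (f u, u)
  | .wall f, u, Δ => ∀ v, HDeriv Γ Δ (f v, u)
  | .wex f, u, Δ => ∃ v, HDeriv Γ Δ (f v, u)

lemma lp_weaken {Γ Γ' : Multiset (HJudg W T Atom)} (hle : Γ ≤ Γ') :
    ∀ {A : HFormula W T Atom} {u Δ' C}, LeftPrem Γ A u Δ' C → LeftPrem Γ' A u Δ' C := by
  intro A u Δ' C h
  cases A with
  | atom a ts => exact h
  | tensor A B => exact weaken h hle
  | one => exact weaken h hle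
  | limp A B =>
      obtain ⟨Δ₁, Δ₂, rfl, p, q⟩ := h
      exact ⟨Δ₁, Δ₂, rfl, weaken p hle, weaken q hle⟩
  | with' A B => exact h.imp (fun p => weaken p hle) (fun p => weaken p hle)
  | top => exact h
  | oplus A B => exact ⟨weaken h.1 hle, weaken h.2 hle⟩
  | zero => trivial
  | bang A => exact weaken h (Multiset.cons_le_cons _ hle)
  | fall f => obtain ⟨t, p⟩ := h; exact ⟨t, weaken p hle⟩
  | fex f => exact fun t => weaken (h t) hle
  | at' A v => exact weaken h hle
  | down f => exact weaken h hle
  | wall f => obtain ⟨v, p⟩ := h; exact ⟨v, weaken p hle⟩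
  | wex f => exact fun v => weaken (h v) hle


lemma cut_main {A : HFormula W T Atom} {u : W}
    (hprin : ∀ Γ Δ Δ' C, HDeriv Γ Δ (A, u) → LeftPrem Γ A u Δ' C → HDeriv Γ (Δ + Δ') C) :
    ∀ {Γ E C}, HDeriv Γ E C → ∀ {Δ Δ'}, E = (A, u) ::ₘ Δ' → HDeriv Γ Δ (A, u) →
      HDeriv Γ (Δ + Δ') C := by
  intro Γ E C h2
  induction h2 with
  | init Γ a ts w =>
    intro Δ Δ' hE h1
    obtain ⟨hpq, rfl⟩ := (Multiset.singleton_eq_cons_iff _).mp hE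
    injection hpq with hA hu; subst hA; subst hu
    simpa using h1
  | copy hmem p ih =>
    intro Δ Δ' hE h1
    subst hE
    have H := ih (Multiset.cons_swap _ _ _) h1
    rw [Multiset.add_cons] at H
    exact .copy hmem H
  | @tensorR Γ Δ₁ Δ₂ B₁ B₂ w p1 p2 ih1 ih2 =>
    intro Δ Δ' hE h1
    have hmem : (A, u) ∈ Δ₁ + Δ₂ := by rw [hE]; exact Multiset.mem_cons_self _ _
    rcases Multiset.mem_add.mp hmem with h | h
    · obtain ⟨Δ₁', rfl⟩ := Multiset.exists_cons_of_mem h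
      rw [Multiset.cons_add, Multiset.cons_inj_right] at hE
      subst hE
      rw [← add_assoc]
      exact .tensorR (ih1 rfl h1) p2
    · obtain ⟨Δ₂', rfl⟩ := Multiset.exists_cons_of_mem h
      rw [Multiset.add_cons, Multiset.cons_inj_right] at hE
      subst hE
      rw [add_left_comm]
      exact .tensorR p1 (ih2 rfl h1)
  | @tensorL Γ Δ₀ C B₁ B₂ v p ih =>
    intro Δ Δ' hE h1
    rcases Multiset.cons_eq_cons.mp hE with ⟨hpq, rfl⟩ | ⟨-, Δ₀', rfl, rfl⟩
    · injection hpq with hA hu; subst hA; subst hu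
      exact hprin _ _ _ _ h1 p
    · have H := ih (cons_rot _ _ _ _) h1
      rw [Multiset.add_cons, Multiset.add_cons] at H
      rw [Multiset.add_cons]
      exact .tensorL H
  | oneR Γ w =>
    intro Δ Δ' hE h1
    exact absurd hE.symm Multiset.cons_ne_zero
  | @oneL Γ Δ₀ C v p ih =>
    intro Δ Δ' hE h1
    rcases Multiset.cons_eq_cons.mp hE with ⟨hpq, rfl⟩ | ⟨-, Δ₀', rfl, rfl⟩
    · injection hpq with hA hu; subst hA; subst hu
      exact hprin _ _ _ _ h1 p
    · have H := ih rfl h1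
      rw [Multiset.add_cons]
      exact .oneL H
  | @limpR Γ E' B₁ B₂ w p ih =>
    intro Δ Δ' hE h1
    subst hE
    have H := ih (Multiset.cons_swap _ _ _) h1
    rw [Multiset.add_cons] at H
    exact .limpR H
  | @limpL Γ Δ₁ Δ₂ C B₁ B₂ v p1 p2 ih1 ih2 =>
    intro Δ Δ' hE h1
    rcases Multiset.cons_eq_cons.mp hE with ⟨hpq, rfl⟩ | ⟨-, Δ₀', h₀, rfl⟩
    · injection hpq with hA hu; subst hA; subst hu
      exact hprin _ _ _ _ h1 ⟨Δ₁, Δ₂, rfl, p1, p2⟩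
    · have hmem : (A, u) ∈ Δ₁ + Δ₂ := by rw [h₀]; exact Multiset.mem_cons_self _ _
      rcases Multiset.mem_add.mp hmem with h | h
      · obtain ⟨Δ₁', rfl⟩ := Multiset.exists_cons_of_mem h
        rw [Multiset.cons_add, Multiset.cons_inj_right] at h₀
        subst h₀
        have H := ih1 rfl h1
        rw [Multiset.add_cons, ← add_assoc]
        exact .limpL H p2
      · obtain ⟨Δ₂', rfl⟩ := Multiset.exists_cons_of_mem h
        rw [Multiset.add_cons, Multiset.cons_inj_right] at h₀
        subst h₀
        have H := ih2 (Multiset.cons_swap _ _ _) h1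
        rw [Multiset.add_cons] at H
        rw [Multiset.add_cons, add_left_comm]
        exact .limpL p1 H
  | withR p1 p2 ih1 ih2 =>
    intro Δ Δ' hE h1
    exact .withR (ih1 hE h1) (ih2 hE h1)
  | @withL₁ Γ Δ₀ C B₁ B₂ v p ih =>
    intro Δ Δ' hE h1
    rcases Multiset.cons_eq_cons.mp hE with ⟨hpq, rfl⟩ | ⟨-, Δ₀', rfl, rfl⟩
    · injection hpq with hA hu; subst hA; subst hu
      exact hprin _ _ _ _ h1 (Or.inl p)
    · have H := ih (Multiset.cons_swap _ _ _) h1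
      rw [Multiset.add_cons] at H
      rw [Multiset.add_cons]
      exact .withL₁ H
  | @withL₂ Γ Δ₀ C B₁ B₂ v p ih =>
    intro Δ Δ' hE h1
    rcases Multiset.cons_eq_cons.mp hE with ⟨hpq, rfl⟩ | ⟨-, Δ₀', rfl, rfl⟩
    · injection hpq with hA hu; subst hA; subst hu
      exact hprin _ _ _ _ h1 (Or.inr p)
    · have H := ih (Multiset.cons_swap _ _ _) h1
      rw [Multiset.add_cons] at H
      rw [Multiset.add_cons]
      exact .withL₂ H
  | topR Γ Δ₀ w =>
    intro Δ Δ' hE h1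
    exact .topR ..
  | oplusR₁ p ih =>
    intro Δ Δ' hE h1
    exact .oplusR₁ (ih hE h1)
  | oplusR₂ p ih =>
    intro Δ Δ' hE h1
    exact .oplusR₂ (ih hE h1)
  | @oplusL Γ Δ₀ C B₁ B₂ v p1 p2 ih1 ih2 =>
    intro Δ Δ' hE h1
    rcases Multiset.cons_eq_cons.mp hE with ⟨hpq, rfl⟩ | ⟨-, Δ₀', rfl, rfl⟩
    · injection hpq with hA hu; subst hA; subst hu
      exact hprin _ _ _ _ h1 ⟨p1, p2⟩
    · have H1 := ih1 (Multiset.cons_swap _ _ _) h1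
      have H2 := ih2 (Multiset.cons_swap _ _ _) h1
      rw [Multiset.add_cons] at H1 H2
      rw [Multiset.add_cons]
      exact .oplusL H1 H2
  | zeroL Γ Δ₀ v C =>
    intro Δ Δ' hE h1
    rcases Multiset.cons_eq_cons.mp hE with ⟨hpq, rfl⟩ | ⟨-, Δ₀', rfl, rfl⟩
    · injection hpq with hA hu; subst hA; subst hu
      exact hprin _ _ _ _ h1 trivial
    · rw [Multiset.add_cons]
      exact .zeroL ..
  | bangR p ih =>
    intro Δ Δ' hE h1
    exact absurd hE.symm Multiset.cons_ne_zero
  | @bangL Γ Δ₀ C B v p ih =>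
    intro Δ Δ' hE h1
    rcases Multiset.cons_eq_cons.mp hE with ⟨hpq, rfl⟩ | ⟨-, Δ₀', rfl, rfl⟩
    · injection hpq with hA hu; subst hA; subst hu
      exact hprin _ _ _ _ h1 p
    · have H := ih rfl (weaken h1 (Multiset.le_cons_self _ _))
      rw [Multiset.add_cons]
      exact .bangL H
  | fallR p ih =>
    intro Δ Δ' hE h1
    exact .fallR fun t => ih t hE h1
  | @fallL Γ Δ₀ C f v t p ih =>
    intro Δ Δ' hE h1
    rcases Multiset.cons_eq_cons.mp hE with ⟨hpq, rfl⟩ | ⟨-, Δ₀', rfl, rfl⟩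
    · injection hpq with hA hu; subst hA; subst hu
      exact hprin _ _ _ _ h1 ⟨t, p⟩
    · have H := ih (Multiset.cons_swap _ _ _) h1
      rw [Multiset.add_cons] at H
      rw [Multiset.add_cons]
      exact .fallL t H
  | fexR t p ih =>
    intro Δ Δ' hE h1
    exact .fexR t (ih hE h1)
  | @fexL Γ Δ₀ C f v p ih =>
    intro Δ Δ' hE h1
    rcases Multiset.cons_eq_cons.mp hE with ⟨hpq, rfl⟩ | ⟨-, Δ₀', rfl, rfl⟩
    · injection hpq with hA hu; subst hA; subst hu
      exact hprin _ _ _ _ h1 p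
    · rw [Multiset.add_cons]
      refine .fexL fun t => ?_
      have H := ih t (Multiset.cons_swap _ _ _) h1
      rwa [Multiset.add_cons] at H
  | atR p ih =>
    intro Δ Δ' hE h1
    exact .atR (ih hE h1)
  | @atL Γ Δ₀ C B v₁ v₂ p ih =>
    intro Δ Δ' hE h1
    rcases Multiset.cons_eq_cons.mp hE with ⟨hpq, rfl⟩ | ⟨-, Δ₀', rfl, rfl⟩
    · injection hpq with hA hu; subst hA; subst hu
      exact hprin _ _ _ _ h1 p
    · have H := ih (Multiset.cons_swap _ _ _) h1
      rw [Multiset.add_cons] at H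
      rw [Multiset.add_cons]
      exact .atL H
  | downR p ih =>
    intro Δ Δ' hE h1
    exact .downR (ih hE h1)
  | @downL Γ Δ₀ C f v p ih =>
    intro Δ Δ' hE h1
    rcases Multiset.cons_eq_cons.mp hE with ⟨hpq, rfl⟩ | ⟨-, Δ₀', rfl, rfl⟩
    · injection hpq with hA hu; subst hA; subst hu
      exact hprin _ _ _ _ h1 p
    · have H := ih (Multiset.cons_swap _ _ _) h1
      rw [Multiset.add_cons] at H
      rw [Multiset.add_cons]
      exact .downL H
  | wallR p ih =>
    intro Δ Δ' hE h1
    exact .wallR fun v => ih v hE h1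
  | @wallL Γ Δ₀ C f v₀ v p ih =>
    intro Δ Δ' hE h1
    rcases Multiset.cons_eq_cons.mp hE with ⟨hpq, rfl⟩ | ⟨-, Δ₀', rfl, rfl⟩
    · injection hpq with hA hu; subst hA; subst hu
      exact hprin _ _ _ _ h1 ⟨v, p⟩
    · have H := ih (Multiset.cons_swap _ _ _) h1
      rw [Multiset.add_cons] at H
      rw [Multiset.add_cons]
      exact .wallL v H
  | wexR v p ih =>
    intro Δ Δ' hE h1
    exact .wexR v (ih hE h1)
  | @wexL Γ Δ₀ C f v p ih =>
    intro Δ Δ' hE h1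
    rcases Multiset.cons_eq_cons.mp hE with ⟨hpq, rfl⟩ | ⟨-, Δ₀', rfl, rfl⟩
    · injection hpq with hA hu; subst hA; subst hu
      exact hprin _ _ _ _ h1 p
    · rw [Multiset.add_cons]
      refine .wexL fun v' => ?_
      have H := ih v' (Multiset.cons_swap _ _ _) h1
      rwa [Multiset.add_cons] at H
lemma cut_right {A : HFormula W T Atom} {u : W}
    (hred : ∀ Γ Δ Δ' C, RightPrem Γ A u Δ → LeftPrem Γ A u Δ' C → HDeriv Γ (Δ + Δ') C) :
    ∀ {Γ Δ X}, HDeriv Γ Δ X → ∀ {Δ' C}, X = (A, u) → LeftPrem Γ A u Δ' C →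
      HDeriv Γ (Δ + Δ') C := by
  intro Γ Δ X h1
  induction h1 with
  | init Γ a ts w =>
    intro Δ' C hX hL
    injection hX with hA hu; subst hA; subst hu
    exact hred _ _ _ _ rfl hL
  | copy hmem p ih =>
    intro Δ' C hX hL
    have H := ih hX hL
    rw [Multiset.cons_add] at H
    exact .copy hmem H
  | tensorR p1 p2 _ _ =>
    intro Δ' C hX hL
    injection hX with hA hu; subst hA; subst hu
    exact hred _ _ _ _ ⟨_, _, rfl, p1, p2⟩ hL
  | tensorL p ih =>
    intro Δ' C hX hL
    have H := ih hX hL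
    rw [Multiset.cons_add, Multiset.cons_add] at H
    rw [Multiset.cons_add]
    exact .tensorL H
  | oneR Γ w =>
    intro Δ' C hX hL
    injection hX with hA hu; subst hA; subst hu
    exact hred _ _ _ _ rfl hL
  | oneL p ih =>
    intro Δ' C hX hL
    have H := ih hX hL
    rw [Multiset.cons_add]
    exact .oneL H
  | limpR p _ =>
    intro Δ' C hX hL
    injection hX with hA hu; subst hA; subst hu
    exact hred _ _ _ _ p hL
  | limpL p1 p2 ih1 ih2 =>
    intro Δ' C hX hL
    have H := ih2 hX hL
    rw [Multiset.cons_add] at H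
    rw [Multiset.cons_add, add_assoc]
    exact .limpL p1 H
  | withR p1 p2 _ _ =>
    intro Δ' C hX hL
    injection hX with hA hu; subst hA; subst hu
    exact hred _ _ _ _ ⟨p1, p2⟩ hL
  | withL₁ p ih =>
    intro Δ' C hX hL
    have H := ih hX hL
    rw [Multiset.cons_add] at H
    rw [Multiset.cons_add]
    exact .withL₁ H
  | withL₂ p ih =>
    intro Δ' C hX hL
    have H := ih hX hL
    rw [Multiset.cons_add] at H
    rw [Multiset.cons_add]
    exact .withL₂ H
  | topR Γ Δ₀ w =>
    intro Δ' C hX hL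
    injection hX with hA hu; subst hA; subst hu
    exact hred _ _ _ _ trivial hL
  | oplusR₁ p _ =>
    intro Δ' C hX hL
    injection hX with hA hu; subst hA; subst hu
    exact hred _ _ _ _ (Or.inl p) hL
  | oplusR₂ p _ =>
    intro Δ' C hX hL
    injection hX with hA hu; subst hA; subst hu
    exact hred _ _ _ _ (Or.inr p) hL
  | oplusL p1 p2 ih1 ih2 =>
    intro Δ' C hX hL
    have H1 := ih1 hX hL
    have H2 := ih2 hX hL
    rw [Multiset.cons_add] at H1 H2
    rw [Multiset.cons_add]
    exact .oplusL H1 H2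
  | zeroL Γ Δ₀ v C₀ =>
    intro Δ' C hX hL
    rw [Multiset.cons_add]
    exact .zeroL ..
  | bangR p _ =>
    intro Δ' C hX hL
    injection hX with hA hu; subst hA; subst hu
    exact hred _ _ _ _ ⟨rfl, p⟩ hL
  | bangL p ih =>
    intro Δ' C hX hL
    have H := ih hX (lp_weaken (Multiset.le_cons_self _ _) hL)
    rw [Multiset.cons_add]
    exact .bangL H
  | fallR p _ =>
    intro Δ' C hX hL
    injection hX with hA hu; subst hA; subst hu
    exact hred _ _ _ _ p hL
  | fallL t p ih =>
    intro Δ' C hX hL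
    have H := ih hX hL
    rw [Multiset.cons_add] at H
    rw [Multiset.cons_add]
    exact .fallL t H
  | fexR t p _ =>
    intro Δ' C hX hL
    injection hX with hA hu; subst hA; subst hu
    exact hred _ _ _ _ ⟨t, p⟩ hL
  | fexL p ih =>
    intro Δ' C hX hL
    rw [Multiset.cons_add]
    refine .fexL fun t => ?_
    have H := ih t hX hL
    rwa [Multiset.cons_add] at H
  | atR p _ =>
    intro Δ' C hX hL
    injection hX with hA hu; subst hA; subst hu
    exact hred _ _ _ _ p hL
  | atL p ih =>
    intro Δ' C hX hL
    have H := ih hX hL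
    rw [Multiset.cons_add] at H
    rw [Multiset.cons_add]
    exact .atL H
  | downR p _ =>
    intro Δ' C hX hL
    injection hX with hA hu; subst hA; subst hu
    exact hred _ _ _ _ p hL
  | downL p ih =>
    intro Δ' C hX hL
    have H := ih hX hL
    rw [Multiset.cons_add] at H
    rw [Multiset.cons_add]
    exact .downL H
  | wallR p _ =>
    intro Δ' C hX hL
    injection hX with hA hu; subst hA; subst hu
    exact hred _ _ _ _ p hL
  | wallL v p ih =>
    intro Δ' C hX hL
    have H := ih hX hL
    rw [Multiset.cons_add] at H
    rw [Multiset.cons_add]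
    exact .wallL v H
  | wexR v p _ =>
    intro Δ' C hX hL
    injection hX with hA hu; subst hA; subst hu
    exact hred _ _ _ _ ⟨v, p⟩ hL
  | wexL p ih =>
    intro Δ' C hX hL
    rw [Multiset.cons_add]
    refine .wexL fun v => ?_
    have H := ih v hX hL
    rwa [Multiset.cons_add] at H

lemma cut_bang {A : HFormula W T Atom} {u : W}
    (ihA : ∀ Γ Δ Δ' C, HDeriv Γ Δ (A, u) → HDeriv Γ ((A, u) ::ₘ Δ') C →
      HDeriv Γ (Δ + Δ') C) :
    ∀ {Γ₁ Δ C}, HDeriv Γ₁ Δ C → ∀ {Γ}, Γ₁ = (A, u) ::ₘ Γ → HDeriv Γ 0 (A, u) →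
      HDeriv Γ Δ C := by
  intro Γ₁ Δ C h2
  induction h2 with
  | init _ a ts w => intro Γ _ _; exact .init ..
  | copy hmem p ih =>
    intro Γ hΓ h1
    subst hΓ
    rcases Multiset.mem_cons.mp hmem with heq | hmem'
    · have H := ih rfl h1
      rw [heq] at H
      have := ihA Γ 0 _ _ h1 H
      simpa using this
    · exact .copy hmem' (ih rfl h1)
  | tensorR p1 p2 ih1 ih2 => intro Γ hΓ h1; exact .tensorR (ih1 hΓ h1) (ih2 hΓ h1)
  | tensorL p ih => intro Γ hΓ h1; exact .tensorL (ih hΓ h1)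
  | oneR _ w => intro Γ _ _; exact .oneR ..
  | oneL p ih => intro Γ hΓ h1; exact .oneL (ih hΓ h1)
  | limpR p ih => intro Γ hΓ h1; exact .limpR (ih hΓ h1)
  | limpL p1 p2 ih1 ih2 => intro Γ hΓ h1; exact .limpL (ih1 hΓ h1) (ih2 hΓ h1)
  | withR p1 p2 ih1 ih2 => intro Γ hΓ h1; exact .withR (ih1 hΓ h1) (ih2 hΓ h1)
  | withL₁ p ih => intro Γ hΓ h1; exact .withL₁ (ih hΓ h1)
  | withL₂ p ih => intro Γ hΓ h1; exact .withL₂ (ih hΓ h1)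
  | topR _ Δ₀ w => intro Γ _ _; exact .topR ..
  | oplusR₁ p ih => intro Γ hΓ h1; exact .oplusR₁ (ih hΓ h1)
  | oplusR₂ p ih => intro Γ hΓ h1; exact .oplusR₂ (ih hΓ h1)
  | oplusL p1 p2 ih1 ih2 => intro Γ hΓ h1; exact .oplusL (ih1 hΓ h1) (ih2 hΓ h1)
  | zeroL _ Δ₀ v C₀ => intro Γ _ _; exact .zeroL ..
  | bangR p ih => intro Γ hΓ h1; exact .bangR (ih hΓ h1)
  | bangL p ih =>
    intro Γ hΓ h1
    subst hΓ
    exact .bangL (ih (Multiset.cons_swap _ _ _) (weaken h1 (Multiset.le_cons_self _ _)))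
  | fallR p ih => intro Γ hΓ h1; exact .fallR fun t => ih t hΓ h1
  | fallL t p ih => intro Γ hΓ h1; exact .fallL t (ih hΓ h1)
  | fexR t p ih => intro Γ hΓ h1; exact .fexR t (ih hΓ h1)
  | fexL p ih => intro Γ hΓ h1; exact .fexL fun t => ih t hΓ h1
  | atR p ih => intro Γ hΓ h1; exact .atR (ih hΓ h1)
  | atL p ih => intro Γ hΓ h1; exact .atL (ih hΓ h1)
  | downR p ih => intro Γ hΓ h1; exact .downR (ih hΓ h1)
  | downL p ih => intro Γ hΓ h1; exact .downL (ih hΓ h1)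
  | wallR p ih => intro Γ hΓ h1; exact .wallR fun v => ih v hΓ h1
  | wallL v p ih => intro Γ hΓ h1; exact .wallL v (ih hΓ h1)
  | wexR v p ih => intro Γ hΓ h1; exact .wexR v (ih hΓ h1)
  | wexL p ih => intro Γ hΓ h1; exact .wexL fun v => ih v hΓ h1
theorem cut_all : ∀ (A : HFormula W T Atom) (u : W)
    (Γ Δ Δ' : Multiset (HJudg W T Atom)) (C : HJudg W T Atom),
    HDeriv Γ Δ (A, u) → HDeriv Γ ((A, u) ::ₘ Δ') C → HDeriv Γ (Δ + Δ') C := by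
  intro A
  induction A with
  | atom a ts =>
    intro u Γ Δ Δ' C h1 h2
    refine cut_main (fun Γ Δ Δ' C h1 hL =>
      cut_right (fun Γ Δ Δ' C hR hL => ?_) h1 rfl hL) h2 rfl h1
    obtain ⟨rfl, rfl⟩ := hL
    subst hR
    simpa using HDeriv.init Γ a ts u
  | tensor B₁ B₂ ih1 ih2 =>
    intro u Γ Δ Δ' C h1 h2
    refine cut_main (fun Γ Δ Δ' C h1 hL =>
      cut_right (fun Γ Δ Δ' C hR hL => ?_) h1 rfl hL) h2 rfl h1
    obtain ⟨Δ₁, Δ₂, rfl, p1, p2⟩ := hR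
    have H2 := ih2 u Γ Δ₂ ((B₁, u) ::ₘ Δ') C p2 (by rw [Multiset.cons_swap]; exact hL)
    rw [Multiset.add_cons] at H2
    have H1 := ih1 u Γ Δ₁ (Δ₂ + Δ') C p1 H2
    rw [add_assoc]
    exact H1
  | one =>
    intro u Γ Δ Δ' C h1 h2
    refine cut_main (fun Γ Δ Δ' C h1 hL =>
      cut_right (fun Γ Δ Δ' C hR hL => ?_) h1 rfl hL) h2 rfl h1
    subst hR
    rw [zero_add]; exact hL
  | limp B₁ B₂ ih1 ih2 =>
    intro u Γ Δ Δ' C h1 h2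
    refine cut_main (fun Γ Δ Δ' C h1 hL =>
      cut_right (fun Γ Δ Δ' C hR hL => ?_) h1 rfl hL) h2 rfl h1
    obtain ⟨Δ₁, Δ₂, rfl, q1, q2⟩ := hL
    have c1 := ih1 u Γ Δ₁ Δ (B₂, u) q1 hR
    have c2 := ih2 u Γ (Δ₁ + Δ) Δ₂ C c1 q2
    rw [add_left_comm, ← add_assoc]
    exact c2
  | with' B₁ B₂ ih1 ih2 =>
    intro u Γ Δ Δ' C h1 h2
    refine cut_main (fun Γ Δ Δ' C h1 hL =>
      cut_right (fun Γ Δ Δ' C hR hL => ?_) h1 rfl hL) h2 rfl h1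
    rcases hL with q | q
    · exact ih1 u Γ Δ Δ' C hR.1 q
    · exact ih2 u Γ Δ Δ' C hR.2 q
  | top =>
    intro u Γ Δ Δ' C h1 h2
    refine cut_main (fun Γ Δ Δ' C h1 hL =>
      cut_right (fun Γ Δ Δ' C hR hL => ?_) h1 rfl hL) h2 rfl h1
    exact hL.elim
  | oplus B₁ B₂ ih1 ih2 =>
    intro u Γ Δ Δ' C h1 h2
    refine cut_main (fun Γ Δ Δ' C h1 hL =>
      cut_right (fun Γ Δ Δ' C hR hL => ?_) h1 rfl hL) h2 rfl h1
    rcases hR with p | p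
    · exact ih1 u Γ Δ Δ' C p hL.1
    · exact ih2 u Γ Δ Δ' C p hL.2
  | zero =>
    intro u Γ Δ Δ' C h1 h2
    refine cut_main (fun Γ Δ Δ' C h1 hL =>
      cut_right (fun Γ Δ Δ' C hR hL => ?_) h1 rfl hL) h2 rfl h1
    exact hR.elim
  | bang B ih =>
    intro u Γ Δ Δ' C h1 h2
    refine cut_main (fun Γ Δ Δ' C h1 hL =>
      cut_right (fun Γ Δ Δ' C hR hL => ?_) h1 rfl hL) h2 rfl h1
    obtain ⟨rfl, p⟩ := hR
    have := cut_bang (ih u) hL rfl p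
    simpa using this
  | fall f ih =>
    intro u Γ Δ Δ' C h1 h2
    refine cut_main (fun Γ Δ Δ' C h1 hL =>
      cut_right (fun Γ Δ Δ' C hR hL => ?_) h1 rfl hL) h2 rfl h1
    obtain ⟨t, q⟩ := hL
    exact ih t u Γ Δ Δ' C (hR t) q
  | fex f ih =>
    intro u Γ Δ Δ' C h1 h2
    refine cut_main (fun Γ Δ Δ' C h1 hL =>
      cut_right (fun Γ Δ Δ' C hR hL => ?_) h1 rfl hL) h2 rfl h1
    obtain ⟨t, p⟩ := hR
    exact ih t u Γ Δ Δ' C p (hL t)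
  | at' B v ih =>
    intro u Γ Δ Δ' C h1 h2
    refine cut_main (fun Γ Δ Δ' C h1 hL =>
      cut_right (fun Γ Δ Δ' C hR hL => ?_) h1 rfl hL) h2 rfl h1
    exact ih v Γ Δ Δ' C hR hL
  | down f ih =>
    intro u Γ Δ Δ' C h1 h2
    refine cut_main (fun Γ Δ Δ' C h1 hL =>
      cut_right (fun Γ Δ Δ' C hR hL => ?_) h1 rfl hL) h2 rfl h1
    exact ih u u Γ Δ Δ' C hR hL
  | wall f ih =>
    intro u Γ Δ Δ' C h1 h2
    refine cut_main (fun Γ Δ Δ' C h1 hL =>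
      cut_right (fun Γ Δ Δ' C hR hL => ?_) h1 rfl hL) h2 rfl h1
    obtain ⟨v, q⟩ := hL
    exact ih v u Γ Δ Δ' C (hR v) q
  | wex f ih =>
    intro u Γ Δ Δ' C h1 h2
    refine cut_main (fun Γ Δ Δ' C h1 hL =>
      cut_right (fun Γ Δ Δ' C hR hL => ?_) h1 rfl hL) h2 rfl h1
    obtain ⟨v, p⟩ := hR
    exact ih v u Γ Δ Δ' C p (hL v)
end HyllCut

/-- **Cut admissibility (linear context).** In HyLL, if `Γ; Δ ⊢ A @ u` and
`Γ; Δ', A @ u ⊢ C @ w` are derivable, then `Γ; Δ, Δ' ⊢ C @ w` is derivable. -/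
theorem hyll_cut_admissible {W T Atom : Type} [Monoid W]
    {Γ Δ Δ' : Multiset (HJudg W T Atom)} {A : HFormula W T Atom} {u : W}
    {C : HJudg W T Atom}
    (h₁ : HDeriv Γ Δ (A, u)) (h₂ : HDeriv Γ ((A, u) ::ₘ Δ') C) :
    HDeriv Γ (Δ + Δ') C := by
  exact HyllCut.cut_all A u Γ Δ Δ' C h₁ h₂
end

section
/- Hybrid Linear Logic (HyLL) is consistent: for every world expression w, there is no derivation of the sequent ·; · ⊢ 0 @ w (i.e., the additive falsum 0 is not provable at any world from empty unbounded and linear contexts). -/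
/-- A degenerate semantics: formulas to `Prop`, world-sensitive only
through the hybrid connectives. Crucially `zero` is `False`. -/
def hval {W T Atom : Type} : HFormula W T Atom → W → Prop
  | .atom _ _, _ => True
  | .tensor A B, w => hval A w ∧ hval B w
  | .one, _ => True
  | .limp A B, w => hval A w → hval B w
  | .with' A B, w => hval A w ∧ hval B w
  | .top, _ => True
  | .oplus A B, w => hval A w ∨ hval B w
  | .zero, _ => False
  | .bang A, w => hval A w
  | .fall f, w => ∀ t, hval (f t) w
  | .fex f, w => ∃ t, hval (f t) w
  | .at' A u, _ => hval A u
  | .down f, w => hval (f w) w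
  | .wall f, w => ∀ v, hval (f v) w
  | .wex f, w => ∃ v, hval (f v) w

/-- Soundness of HyLL with respect to `hval`. -/
theorem hyll_sound {W T Atom : Type}
    {Γ Δ : Multiset (HJudg W T Atom)} {C : HJudg W T Atom}
    (h : HDeriv Γ Δ C) :
    (∀ j ∈ Γ, hval j.1 j.2) → (∀ j ∈ Δ, hval j.1 j.2) → hval C.1 C.2 := by
  induction h with
  | init Γ a ts w => intro _ hΔ; exact hΔ _ (Multiset.mem_singleton_self _)
  | copy hmem _ ih =>
      intro hΓ hΔ
      exact ih hΓ (by
        intro j hj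
        rcases Multiset.mem_cons.mp hj with h | h
        · subst h; exact hΓ _ hmem
        · exact hΔ _ h)
  | tensorR _ _ ih₁ ih₂ =>
      intro hΓ hΔ
      exact ⟨ih₁ hΓ (fun j hj => hΔ j (Multiset.mem_add.mpr (Or.inl hj))),
             ih₂ hΓ (fun j hj => hΔ j (Multiset.mem_add.mpr (Or.inr hj)))⟩
  | tensorL _ ih =>
      intro hΓ hΔ
      refine ih hΓ ?_
      have hAB := hΔ _ (Multiset.mem_cons_self _ _)
      intro j hj
      rcases Multiset.mem_cons.mp hj with h | hj
      · subst h; exact hAB.1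
      · rcases Multiset.mem_cons.mp hj with h | hj
        · subst h; exact hAB.2
        · exact hΔ _ (Multiset.mem_cons_of_mem hj)
  | oneR Γ w => intro _ _; trivial
  | oneL _ ih =>
      intro hΓ hΔ; exact ih hΓ (fun j hj => hΔ _ (Multiset.mem_cons_of_mem hj))
  | limpR _ ih =>
      intro hΓ hΔ hA
      exact ih hΓ (by
        intro j hj
        rcases Multiset.mem_cons.mp hj with h | h
        · subst h; exact hA
        · exact hΔ _ h)
  | limpL _ _ ih₁ ih₂ =>
      intro hΓ hΔ
      have himp := hΔ _ (Multiset.mem_cons_self _ _)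
      have hA := ih₁ hΓ (fun j hj =>
        hΔ _ (Multiset.mem_cons_of_mem (Multiset.mem_add.mpr (Or.inl hj))))
      refine ih₂ hΓ ?_
      intro j hj
      rcases Multiset.mem_cons.mp hj with h | h
      · subst h; exact himp hA
      · exact hΔ _ (Multiset.mem_cons_of_mem (Multiset.mem_add.mpr (Or.inr h)))
  | withR _ _ ih₁ ih₂ => intro hΓ hΔ; exact ⟨ih₁ hΓ hΔ, ih₂ hΓ hΔ⟩
  | withL₁ _ ih =>
      intro hΓ hΔ
      refine ih hΓ ?_
      intro j hj
      rcases Multiset.mem_cons.mp hj with h | h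
      · subst h; exact (hΔ _ (Multiset.mem_cons_self _ _)).1
      · exact hΔ _ (Multiset.mem_cons_of_mem h)
  | withL₂ _ ih =>
      intro hΓ hΔ
      refine ih hΓ ?_
      intro j hj
      rcases Multiset.mem_cons.mp hj with h | h
      · subst h; exact (hΔ _ (Multiset.mem_cons_self _ _)).2
      · exact hΔ _ (Multiset.mem_cons_of_mem h)
  | topR => intro _ _; trivial
  | oplusR₁ _ ih => intro hΓ hΔ; exact Or.inl (ih hΓ hΔ)
  | oplusR₂ _ ih => intro hΓ hΔ; exact Or.inr (ih hΓ hΔ)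
  | oplusL _ _ ih₁ ih₂ =>
      intro hΓ hΔ
      rcases hΔ _ (Multiset.mem_cons_self _ _) with hA | hB
      · refine ih₁ hΓ ?_
        intro j hj
        rcases Multiset.mem_cons.mp hj with h | h
        · subst h; exact hA
        · exact hΔ _ (Multiset.mem_cons_of_mem h)
      · refine ih₂ hΓ ?_
        intro j hj
        rcases Multiset.mem_cons.mp hj with h | h
        · subst h; exact hB
        · exact hΔ _ (Multiset.mem_cons_of_mem h)
  | zeroL Γ Δ u C =>
      intro _ hΔ
      exact absurd (hΔ _ (Multiset.mem_cons_self _ _)) not_false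
  | bangR _ ih => intro hΓ hΔ; exact ih hΓ hΔ
  | bangL _ ih =>
      intro hΓ hΔ
      refine ih ?_ (fun j hj => hΔ _ (Multiset.mem_cons_of_mem hj))
      intro j hj
      rcases Multiset.mem_cons.mp hj with h | h
      · subst h
        have h0 := hΔ _ (Multiset.mem_cons_self _ _)
        simpa [hval] using h0
      · exact hΓ _ h
  | fallR _ ih => intro hΓ hΔ t; exact ih t hΓ hΔ
  | fallL t _ ih =>
      intro hΓ hΔ
      refine ih hΓ ?_
      intro j hj
      rcases Multiset.mem_cons.mp hj with h | h
      · subst h; exact hΔ _ (Multiset.mem_cons_self _ _) t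
      · exact hΔ _ (Multiset.mem_cons_of_mem h)
  | fexR t _ ih => intro hΓ hΔ; exact ⟨t, ih hΓ hΔ⟩
  | fexL _ ih =>
      intro hΓ hΔ
      obtain ⟨t, ht⟩ := hΔ _ (Multiset.mem_cons_self _ _)
      refine ih t hΓ ?_
      intro j hj
      rcases Multiset.mem_cons.mp hj with h | h
      · subst h; exact ht
      · exact hΔ _ (Multiset.mem_cons_of_mem h)
  | atR _ ih => intro hΓ hΔ; exact ih hΓ hΔ
  | atL _ ih =>
      intro hΓ hΔ
      refine ih hΓ ?_
      intro j hj
      rcases Multiset.mem_cons.mp hj with h | h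
      · subst h
        have h0 := hΔ _ (Multiset.mem_cons_self _ _)
        simpa [hval] using h0
      · exact hΔ _ (Multiset.mem_cons_of_mem h)
  | downR _ ih => intro hΓ hΔ; exact ih hΓ hΔ
  | downL _ ih =>
      intro hΓ hΔ
      refine ih hΓ ?_
      intro j hj
      rcases Multiset.mem_cons.mp hj with h | h
      · subst h
        have h0 := hΔ _ (Multiset.mem_cons_self _ _)
        simpa [hval] using h0
      · exact hΔ _ (Multiset.mem_cons_of_mem h)
  | wallR _ ih => intro hΓ hΔ v; exact ih v hΓ hΔ
  | wallL v _ ih =>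
      intro hΓ hΔ
      refine ih hΓ ?_
      intro j hj
      rcases Multiset.mem_cons.mp hj with h | h
      · subst h; exact hΔ _ (Multiset.mem_cons_self _ _) v
      · exact hΔ _ (Multiset.mem_cons_of_mem h)
  | wexR v _ ih => intro hΓ hΔ; exact ⟨v, ih hΓ hΔ⟩
  | wexL _ ih =>
      intro hΓ hΔ
      obtain ⟨v, hv⟩ := hΔ _ (Multiset.mem_cons_self _ _)
      refine ih v hΓ ?_
      intro j hj
      rcases Multiset.mem_cons.mp hj with h | h
      · subst h; exact hv
      · exact hΔ _ (Multiset.mem_cons_of_mem h)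

/-- **Consistency of HyLL.** For every world expression `w`, there is no
derivation of the sequent `·; · ⊢ 0 @ w`. -/
theorem hyll_consistent {W T Atom : Type} [Monoid W] (w : W) :
    ¬ HDeriv (0 : Multiset (HJudg W T Atom)) (0 : Multiset (HJudg W T Atom))
        (HFormula.zero, w) := by
  intro h
  exact hyll_sound h (fun j hj => absurd hj (Multiset.notMem_zero j))
    (fun j hj => absurd hj (Multiset.notMem_zero j))
end

section
/- HyLL is conservative with respect to intuitionistic first-order linear logic (ILL): for contexts Γ, Δ and formula C containing no hybrid connectives (no 'at', no ↓, no world quantifiers), the HyLL sequent Γ@ι; Δ@ι ⊢ C @ ι, obtained by labelling every formula with the identity world ι, is derivable in HyLL if and only if the sequent Γ; Δ ⊢ C is derivable in ILL. -/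
/-- Formulas of intuitionistic first-order linear logic (ILL):
no hybrid connectives (`at`, `↓`, world quantifiers). -/
inductive IFormula (T Atom : Type) : Type where
  | atom   : Atom → List T → IFormula T Atom
  | tensor : IFormula T Atom → IFormula T Atom → IFormula T Atom
  | one    : IFormula T Atom
  | limp   : IFormula T Atom → IFormula T Atom → IFormula T Atom
  | with'  : IFormula T Atom → IFormula T Atom → IFormula T Atom
  | top    : IFormula T Atom
  | oplus  : IFormula T Atom → IFormula T Atom → IFormula T Atom
  | zero   : IFormula T Atom
  | bang   : IFormula T Atom → IFormula T Atom
  | fall   : (T → IFormula T Atom) → IFormula T Atom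
  | fex    : (T → IFormula T Atom) → IFormula T Atom

/-- Standard sequent calculus of ILL: `IDeriv Γ Δ C` means `Γ; Δ ⊢ C`,
with unbounded context `Γ` and linear context `Δ`. -/
inductive IDeriv {T Atom : Type} :
    Multiset (IFormula T Atom) → Multiset (IFormula T Atom) → IFormula T Atom → Prop where
  | init (Γ : Multiset (IFormula T Atom)) (a : Atom) (ts : List T) :
      IDeriv Γ {.atom a ts} (.atom a ts)
  | copy {Γ Δ C} {A : IFormula T Atom} :
      A ∈ Γ → IDeriv Γ (A ::ₘ Δ) C → IDeriv Γ Δ C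
  | tensorR {Γ Δ₁ Δ₂} {A B : IFormula T Atom} :
      IDeriv Γ Δ₁ A → IDeriv Γ Δ₂ B → IDeriv Γ (Δ₁ + Δ₂) (.tensor A B)
  | tensorL {Γ Δ C} {A B : IFormula T Atom} :
      IDeriv Γ (A ::ₘ B ::ₘ Δ) C → IDeriv Γ ((IFormula.tensor A B) ::ₘ Δ) C
  | oneR (Γ : Multiset (IFormula T Atom)) : IDeriv Γ 0 .one
  | oneL {Γ Δ C} : IDeriv Γ Δ C → IDeriv Γ ((IFormula.one : IFormula T Atom) ::ₘ Δ) C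
  | limpR {Γ Δ} {A B : IFormula T Atom} :
      IDeriv Γ (A ::ₘ Δ) B → IDeriv Γ Δ (.limp A B)
  | limpL {Γ Δ₁ Δ₂ C} {A B : IFormula T Atom} :
      IDeriv Γ Δ₁ A → IDeriv Γ (B ::ₘ Δ₂) C →
      IDeriv Γ ((IFormula.limp A B) ::ₘ (Δ₁ + Δ₂)) C
  | withR {Γ Δ} {A B : IFormula T Atom} :
      IDeriv Γ Δ A → IDeriv Γ Δ B → IDeriv Γ Δ (.with' A B)
  | withL₁ {Γ Δ C} {A B : IFormula T Atom} :
      IDeriv Γ (A ::ₘ Δ) C → IDeriv Γ ((IFormula.with' A B) ::ₘ Δ) C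
  | withL₂ {Γ Δ C} {A B : IFormula T Atom} :
      IDeriv Γ (B ::ₘ Δ) C → IDeriv Γ ((IFormula.with' A B) ::ₘ Δ) C
  | topR (Γ Δ : Multiset (IFormula T Atom)) : IDeriv Γ Δ .top
  | oplusR₁ {Γ Δ} {A B : IFormula T Atom} :
      IDeriv Γ Δ A → IDeriv Γ Δ (.oplus A B)
  | oplusR₂ {Γ Δ} {A B : IFormula T Atom} :
      IDeriv Γ Δ B → IDeriv Γ Δ (.oplus A B)
  | oplusL {Γ Δ C} {A B : IFormula T Atom} :
      IDeriv Γ (A ::ₘ Δ) C → IDeriv Γ (B ::ₘ Δ) C →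
      IDeriv Γ ((IFormula.oplus A B) ::ₘ Δ) C
  | zeroL (Γ Δ : Multiset (IFormula T Atom)) (C : IFormula T Atom) :
      IDeriv Γ ((IFormula.zero : IFormula T Atom) ::ₘ Δ) C
  | bangR {Γ} {A : IFormula T Atom} :
      IDeriv Γ 0 A → IDeriv Γ 0 (.bang A)
  | bangL {Γ Δ C} {A : IFormula T Atom} :
      IDeriv (A ::ₘ Γ) Δ C → IDeriv Γ ((IFormula.bang A) ::ₘ Δ) C
  | fallR {Γ Δ} {f : T → IFormula T Atom} :
      (∀ t, IDeriv Γ Δ (f t)) → IDeriv Γ Δ (.fall f)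
  | fallL {Γ Δ C} {f : T → IFormula T Atom} (t : T) :
      IDeriv Γ (f t ::ₘ Δ) C → IDeriv Γ ((IFormula.fall f) ::ₘ Δ) C
  | fexR {Γ Δ} {f : T → IFormula T Atom} (t : T) :
      IDeriv Γ Δ (f t) → IDeriv Γ Δ (.fex f)
  | fexL {Γ Δ C} {f : T → IFormula T Atom} :
      (∀ t, IDeriv Γ (f t ::ₘ Δ) C) → IDeriv Γ ((IFormula.fex f) ::ₘ Δ) C

/-- Embedding of ILL formulas into HyLL formulas (the image contains no
hybrid connectives). -/
def IFormula.toHyLL {W T Atom : Type} : IFormula T Atom → HFormula W T Atom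
  | .atom a ts  => .atom a ts
  | .tensor A B => .tensor A.toHyLL B.toHyLL
  | .one        => .one
  | .limp A B   => .limp A.toHyLL B.toHyLL
  | .with' A B  => .with' A.toHyLL B.toHyLL
  | .top        => .top
  | .oplus A B  => .oplus A.toHyLL B.toHyLL
  | .zero       => .zero
  | .bang A     => .bang A.toHyLL
  | .fall f     => .fall (fun t => (f t).toHyLL)
  | .fex f      => .fex (fun t => (f t).toHyLL)

namespace HyLLCons

variable {W T Atom : Type}

/-- Completeness direction: an ILL derivation embeds into HyLL at any world. -/
theorem toH (w : W) {Γ Δ : Multiset (IFormula T Atom)} {C : IFormula T Atom}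
    (d : IDeriv Γ Δ C) :
    HDeriv (Γ.map (fun A => ((A.toHyLL : HFormula W T Atom), w)))
      (Δ.map (fun A => ((A.toHyLL : HFormula W T Atom), w)))
      (C.toHyLL, w) := by
  induction d with
  | init Γ a ts => simpa [IFormula.toHyLL] using HDeriv.init _ a ts w
  | copy hA _ ih => exact HDeriv.copy (Multiset.mem_map_of_mem _ hA) (by simpa using ih)
  | tensorR _ _ ih1 ih2 => simpa [IFormula.toHyLL] using HDeriv.tensorR ih1 ih2
  | tensorL _ ih => simpa [IFormula.toHyLL] using HDeriv.tensorL (by simpa using ih)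
  | oneR Γ => simpa [IFormula.toHyLL] using HDeriv.oneR _ w
  | oneL _ ih => simpa [IFormula.toHyLL] using HDeriv.oneL ih
  | limpR _ ih => simpa [IFormula.toHyLL] using HDeriv.limpR (by simpa using ih)
  | limpL _ _ ih1 ih2 =>
      simpa [IFormula.toHyLL] using HDeriv.limpL ih1 (by simpa using ih2)
  | withR _ _ ih1 ih2 => simpa [IFormula.toHyLL] using HDeriv.withR ih1 ih2
  | withL₁ _ ih => simpa [IFormula.toHyLL] using HDeriv.withL₁ (by simpa using ih)
  | withL₂ _ ih => simpa [IFormula.toHyLL] using HDeriv.withL₂ (by simpa using ih)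
  | topR Γ Δ => simpa [IFormula.toHyLL] using HDeriv.topR _ _ w
  | oplusR₁ _ ih => simpa [IFormula.toHyLL] using HDeriv.oplusR₁ ih
  | oplusR₂ _ ih => simpa [IFormula.toHyLL] using HDeriv.oplusR₂ ih
  | oplusL _ _ ih1 ih2 =>
      simpa [IFormula.toHyLL] using HDeriv.oplusL (by simpa using ih1) (by simpa using ih2)
  | zeroL Γ Δ C => simpa [IFormula.toHyLL] using HDeriv.zeroL _ _ w _
  | bangR _ ih => simpa [IFormula.toHyLL] using HDeriv.bangR (by simpa using ih)
  | bangL _ ih => simpa [IFormula.toHyLL] using HDeriv.bangL (by simpa using ih)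
  | fallR _ ih => simpa [IFormula.toHyLL] using HDeriv.fallR ih
  | fallL t _ ih => simpa [IFormula.toHyLL] using HDeriv.fallL t (by simpa using ih)
  | fexR t _ ih => simpa [IFormula.toHyLL] using HDeriv.fexR t ih
  | fexL _ ih =>
      simpa [IFormula.toHyLL] using HDeriv.fexL (fun t => by simpa using ih t)

/-- The erasure relation between HyLL judgments and ILL formulas. -/
abbrev Rj (J : HJudg W T Atom) (A : IFormula T Atom) : Prop := J.1 = A.toHyLL

theorem relMem {Γ : Multiset (HJudg W T Atom)} {Γ' : Multiset (IFormula T Atom)}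
    (h : Multiset.Rel Rj Γ Γ') {J} (hJ : J ∈ Γ) : ∃ B ∈ Γ', Rj J B := by
  induction h with
  | zero => simp at hJ
  | @cons a b as bs hr _ ih =>
    rcases Multiset.mem_cons.1 hJ with rfl | hJ
    · exact ⟨b, Multiset.mem_cons_self _ _, hr⟩
    · obtain ⟨B, hB, hrB⟩ := ih hJ
      exact ⟨B, Multiset.mem_cons_of_mem hB, hrB⟩

/-- Soundness direction: a HyLL derivation of a hybrid-free sequent yields
an ILL derivation. -/
theorem ofH : ∀ {Γ Δ : Multiset (HJudg W T Atom)} {C : HJudg W T Atom}, HDeriv Γ Δ C →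
    ∀ {Γ' Δ' : Multiset (IFormula T Atom)} {C' : IFormula T Atom},
      Multiset.Rel Rj Γ Γ' → Multiset.Rel Rj Δ Δ' → C.1 = C'.toHyLL →
      IDeriv Γ' Δ' C' := by
  intro Γ Δ C d
  induction d with
  | init Γ a ts w =>
    intro Γ' Δ' C' hΓ hΔ hC
    rw [← Multiset.cons_zero] at hΔ
    obtain ⟨B, Δ'', hB, hrest, rfl⟩ := Multiset.rel_cons_left.1 hΔ
    rw [Multiset.rel_zero_left] at hrest
    subst hrest
    cases B <;> simp [Rj, IFormula.toHyLL] at hB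
    cases C' <;> simp [IFormula.toHyLL] at hC
    obtain ⟨rfl, rfl⟩ := hB
    obtain ⟨rfl, rfl⟩ := hC
    exact IDeriv.init _ _ _
  | copy hmem _ ih =>
    intro Γ' Δ' C' hΓ hΔ hC
    obtain ⟨B, hB, hr⟩ := relMem hΓ hmem
    exact IDeriv.copy hB (ih hΓ (Multiset.Rel.cons hr hΔ) hC)
  | tensorR _ _ ih1 ih2 =>
    intro Γ' Δ' C' hΓ hΔ hC
    obtain ⟨Δ₁', Δ₂', h1, h2, rfl⟩ := Multiset.rel_add_left.1 hΔ
    cases C' <;> simp [IFormula.toHyLL] at hC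
    obtain ⟨hA, hB⟩ := hC
    exact IDeriv.tensorR (ih1 hΓ h1 hA) (ih2 hΓ h2 hB)
  | tensorL _ ih =>
    intro Γ' Δ' C' hΓ hΔ hC
    obtain ⟨B₀, Δ'', hB₀, hrest, rfl⟩ := Multiset.rel_cons_left.1 hΔ
    cases B₀ <;> simp [Rj, IFormula.toHyLL] at hB₀
    obtain ⟨hA, hB⟩ := hB₀
    exact IDeriv.tensorL (ih hΓ (Multiset.Rel.cons hA (Multiset.Rel.cons hB hrest)) hC)
  | oneR Γ w =>
    intro Γ' Δ' C' hΓ hΔ hC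
    rw [Multiset.rel_zero_left] at hΔ
    subst hΔ
    cases C' <;> simp [IFormula.toHyLL] at hC
    exact IDeriv.oneR _
  | oneL _ ih =>
    intro Γ' Δ' C' hΓ hΔ hC
    obtain ⟨B₀, Δ'', hB₀, hrest, rfl⟩ := Multiset.rel_cons_left.1 hΔ
    cases B₀ <;> simp [Rj, IFormula.toHyLL] at hB₀
    exact IDeriv.oneL (ih hΓ hrest hC)
  | limpR _ ih =>
    intro Γ' Δ' C' hΓ hΔ hC
    cases C' <;> simp [IFormula.toHyLL] at hC
    obtain ⟨hA, hB⟩ := hC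
    exact IDeriv.limpR (ih hΓ (Multiset.Rel.cons hA hΔ) hB)
  | limpL _ _ ih1 ih2 =>
    intro Γ' Δ' C' hΓ hΔ hC
    obtain ⟨B₀, Δ'', hB₀, hrest, rfl⟩ := Multiset.rel_cons_left.1 hΔ
    cases B₀ <;> simp [Rj, IFormula.toHyLL] at hB₀
    obtain ⟨hA, hB⟩ := hB₀
    obtain ⟨Δ₁', Δ₂', h1, h2, rfl⟩ := Multiset.rel_add_left.1 hrest
    exact IDeriv.limpL (ih1 hΓ h1 hA) (ih2 hΓ (Multiset.Rel.cons hB h2) hC)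
  | withR _ _ ih1 ih2 =>
    intro Γ' Δ' C' hΓ hΔ hC
    cases C' <;> simp [IFormula.toHyLL] at hC
    obtain ⟨hA, hB⟩ := hC
    exact IDeriv.withR (ih1 hΓ hΔ hA) (ih2 hΓ hΔ hB)
  | withL₁ _ ih =>
    intro Γ' Δ' C' hΓ hΔ hC
    obtain ⟨B₀, Δ'', hB₀, hrest, rfl⟩ := Multiset.rel_cons_left.1 hΔ
    cases B₀ <;> simp [Rj, IFormula.toHyLL] at hB₀
    obtain ⟨hA, hB⟩ := hB₀
    exact IDeriv.withL₁ (ih hΓ (Multiset.Rel.cons hA hrest) hC)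
  | withL₂ _ ih =>
    intro Γ' Δ' C' hΓ hΔ hC
    obtain ⟨B₀, Δ'', hB₀, hrest, rfl⟩ := Multiset.rel_cons_left.1 hΔ
    cases B₀ <;> simp [Rj, IFormula.toHyLL] at hB₀
    obtain ⟨hA, hB⟩ := hB₀
    exact IDeriv.withL₂ (ih hΓ (Multiset.Rel.cons hB hrest) hC)
  | topR Γ Δ w =>
    intro Γ' Δ' C' hΓ hΔ hC
    cases C' <;> simp [IFormula.toHyLL] at hC
    exact IDeriv.topR _ _
  | oplusR₁ _ ih =>
    intro Γ' Δ' C' hΓ hΔ hC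
    cases C' <;> simp [IFormula.toHyLL] at hC
    exact IDeriv.oplusR₁ (ih hΓ hΔ hC.1)
  | oplusR₂ _ ih =>
    intro Γ' Δ' C' hΓ hΔ hC
    cases C' <;> simp [IFormula.toHyLL] at hC
    exact IDeriv.oplusR₂ (ih hΓ hΔ hC.2)
  | oplusL _ _ ih1 ih2 =>
    intro Γ' Δ' C' hΓ hΔ hC
    obtain ⟨B₀, Δ'', hB₀, hrest, rfl⟩ := Multiset.rel_cons_left.1 hΔ
    cases B₀ <;> simp [Rj, IFormula.toHyLL] at hB₀
    obtain ⟨hA, hB⟩ := hB₀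
    exact IDeriv.oplusL (ih1 hΓ (Multiset.Rel.cons hA hrest) hC)
      (ih2 hΓ (Multiset.Rel.cons hB hrest) hC)
  | zeroL Γ Δ u C =>
    intro Γ' Δ' C' hΓ hΔ hC
    obtain ⟨B₀, Δ'', hB₀, hrest, rfl⟩ := Multiset.rel_cons_left.1 hΔ
    cases B₀ <;> simp [Rj, IFormula.toHyLL] at hB₀
    exact IDeriv.zeroL _ _ _
  | bangR _ ih =>
    intro Γ' Δ' C' hΓ hΔ hC
    rw [Multiset.rel_zero_left] at hΔ
    subst hΔ
    cases C' <;> simp [IFormula.toHyLL] at hC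
    exact IDeriv.bangR (ih hΓ Multiset.Rel.zero hC)
  | bangL _ ih =>
    intro Γ' Δ' C' hΓ hΔ hC
    obtain ⟨B₀, Δ'', hB₀, hrest, rfl⟩ := Multiset.rel_cons_left.1 hΔ
    cases B₀ <;> simp [Rj, IFormula.toHyLL] at hB₀
    exact IDeriv.bangL (ih (Multiset.Rel.cons hB₀ hΓ) hrest hC)
  | fallR _ ih =>
    intro Γ' Δ' C' hΓ hΔ hC
    cases C' <;> simp [IFormula.toHyLL] at hC
    subst hC
    exact IDeriv.fallR fun t => ih t hΓ hΔ rfl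
  | fallL t _ ih =>
    intro Γ' Δ' C' hΓ hΔ hC
    obtain ⟨B₀, Δ'', hB₀, hrest, rfl⟩ := Multiset.rel_cons_left.1 hΔ
    cases B₀ <;> simp [Rj, IFormula.toHyLL] at hB₀
    subst hB₀
    exact IDeriv.fallL t (ih hΓ (Multiset.Rel.cons rfl hrest) hC)
  | fexR t _ ih =>
    intro Γ' Δ' C' hΓ hΔ hC
    cases C' <;> simp [IFormula.toHyLL] at hC
    subst hC
    exact IDeriv.fexR t (ih hΓ hΔ rfl)
  | fexL _ ih =>
    intro Γ' Δ' C' hΓ hΔ hC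
    obtain ⟨B₀, Δ'', hB₀, hrest, rfl⟩ := Multiset.rel_cons_left.1 hΔ
    cases B₀ <;> simp [Rj, IFormula.toHyLL] at hB₀
    subst hB₀
    exact IDeriv.fexL fun t => ih t hΓ (Multiset.Rel.cons rfl hrest) hC
  | atR _ _ =>
    intro Γ' Δ' C' hΓ hΔ hC
    cases C' <;> simp [IFormula.toHyLL] at hC
  | atL _ _ =>
    intro Γ' Δ' C' hΓ hΔ hC
    obtain ⟨B₀, Δ'', hB₀, hrest, rfl⟩ := Multiset.rel_cons_left.1 hΔ
    cases B₀ <;> simp [Rj, IFormula.toHyLL] at hB₀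
  | downR _ _ =>
    intro Γ' Δ' C' hΓ hΔ hC
    cases C' <;> simp [IFormula.toHyLL] at hC
  | downL _ _ =>
    intro Γ' Δ' C' hΓ hΔ hC
    obtain ⟨B₀, Δ'', hB₀, hrest, rfl⟩ := Multiset.rel_cons_left.1 hΔ
    cases B₀ <;> simp [Rj, IFormula.toHyLL] at hB₀
  | wallR _ _ =>
    intro Γ' Δ' C' hΓ hΔ hC
    cases C' <;> simp [IFormula.toHyLL] at hC
  | wallL v _ _ =>
    intro Γ' Δ' C' hΓ hΔ hC
    obtain ⟨B₀, Δ'', hB₀, hrest, rfl⟩ := Multiset.rel_cons_left.1 hΔ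
    cases B₀ <;> simp [Rj, IFormula.toHyLL] at hB₀
  | wexR v _ _ =>
    intro Γ' Δ' C' hΓ hΔ hC
    cases C' <;> simp [IFormula.toHyLL] at hC
  | wexL _ _ =>
    intro Γ' Δ' C' hΓ hΔ hC
    obtain ⟨B₀, Δ'', hB₀, hrest, rfl⟩ := Multiset.rel_cons_left.1 hΔ
    cases B₀ <;> simp [Rj, IFormula.toHyLL] at hB₀

theorem relSelf (w : W) (Γ : Multiset (IFormula T Atom)) :
    Multiset.Rel Rj (Γ.map (fun A => ((A.toHyLL : HFormula W T Atom), w))) Γ := by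
  induction Γ using Multiset.induction with
  | empty => simp [Multiset.Rel.zero]
  | cons A Γ ih =>
      rw [Multiset.map_cons]
      exact Multiset.Rel.cons rfl ih

end HyLLCons
/-- **Conservativity of HyLL over ILL.** For contexts `Γ`, `Δ` and formula
`C` containing no hybrid connectives, the HyLL sequent
`Γ@ι; Δ@ι ⊢ C @ ι` — obtained by labelling every formula with the identity
world `ι` (here: `1` of the monoid `W`) — is derivable in HyLL if and only
if `Γ; Δ ⊢ C` is derivable in ILL. -/
theorem hyll_conservative_over_ill {W T Atom : Type} [Monoid W]
    (Γ Δ : Multiset (IFormula T Atom)) (C : IFormula T Atom) :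
    HDeriv (Γ.map (fun A => ((A.toHyLL : HFormula W T Atom), (1 : W))))
        (Δ.map (fun A => ((A.toHyLL : HFormula W T Atom), (1 : W))))
        ((C.toHyLL : HFormula W T Atom), (1 : W))
    ↔ IDeriv Γ Δ C := by
  constructor
  · intro h
    exact HyLLCons.ofH h (HyLLCons.relSelf 1 Γ) (HyLLCons.relSelf 1 Δ) rfl
  · intro h
    exact HyLLCons.toH 1 h
end

section
/- In SELL, inconsistency is local: for an unbounded subexponential label w, the two-sided sequent !^w ?^w 0 ⊢ 0 is not derivable. -/
/-- A subexponential signature `Σ = ⟨I, ≼, U⟩`: a set of labels `I`, a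
pre-order `≼` on `I`, and a set `U ⊆ I` of unbounded labels (allowing
weakening and contraction), upwardly closed with respect to `≼`. -/
structure SellSig (I : Type) where
  le : I → I → Prop
  le_refl : ∀ a, le a a
  le_trans : ∀ a b c, le a b → le b c → le a c
  U : Set I
  U_upclosed : ∀ a b, a ∈ U → le a b → b ∈ U

/-- Formulas of SELL: classical first-order linear logic with
subexponentials `!^a` and `?^a` for labels `a : I`. -/
inductive SFormula (I T Atom : Type) : Type where
  | atom   : Atom → List T → SFormula I T Atom              -- p(t⃗)
  | natom  : Atom → List T → SFormula I T Atom              -- p(t⃗)⊥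
  | one    : SFormula I T Atom                              -- 1
  | bot    : SFormula I T Atom                              -- ⊥
  | zero   : SFormula I T Atom                              -- 0
  | top    : SFormula I T Atom                              -- ⊤
  | tensor : SFormula I T Atom → SFormula I T Atom → SFormula I T Atom  -- ⊗
  | par    : SFormula I T Atom → SFormula I T Atom → SFormula I T Atom  -- ⅋
  | oplus  : SFormula I T Atom → SFormula I T Atom → SFormula I T Atom  -- ⊕
  | with'  : SFormula I T Atom → SFormula I T Atom → SFormula I T Atom  -- &
  | fex    : (T → SFormula I T Atom) → SFormula I T Atom    -- ∃x
  | fall   : (T → SFormula I T Atom) → SFormula I T Atom    -- ∀x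
  | sbang  : I → SFormula I T Atom → SFormula I T Atom      -- !^a
  | squest : I → SFormula I T Atom → SFormula I T Atom      -- ?^a

/-- De Morgan dual (linear negation) of a SELL formula. -/
def SFormula.dual {I T Atom : Type} : SFormula I T Atom → SFormula I T Atom
  | .atom a ts  => .natom a ts
  | .natom a ts => .atom a ts
  | .one        => .bot
  | .bot        => .one
  | .zero       => .top
  | .top        => .zero
  | .tensor A B => .par A.dual B.dual
  | .par A B    => .tensor A.dual B.dual
  | .oplus A B  => .with' A.dual B.dual
  | .with' A B  => .oplus A.dual B.dual
  | .fex f      => .fall (fun t => (f t).dual)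
  | .fall f     => .fex (fun t => (f t).dual)
  | .sbang a A  => .squest a A.dual
  | .squest a A => .sbang a A.dual

/-- One-sided sequent calculus for SELL over a signature `σ`:
`SDeriv σ Γ` means `⊢ Γ` is derivable.  Promotion `!^a` requires all
other formulas in the sequent to be of the form `?^b F` with `a ≼ b`;
weakening and contraction are available for `?^a` exactly when `a ∈ U`. -/
inductive SDeriv {I T Atom : Type} (σ : SellSig I) :
    Multiset (SFormula I T Atom) → Prop where
  | init (a : Atom) (ts : List T) :
      SDeriv σ {.atom a ts, .natom a ts}
  | oneR : SDeriv σ {(.one : SFormula I T Atom)}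
  | botR {Γ} : SDeriv σ Γ → SDeriv σ ((SFormula.bot : SFormula I T Atom) ::ₘ Γ)
  | topR (Γ : Multiset (SFormula I T Atom)) :
      SDeriv σ ((SFormula.top : SFormula I T Atom) ::ₘ Γ)
  | tensorR {Γ Δ} {A B : SFormula I T Atom} :
      SDeriv σ (A ::ₘ Γ) → SDeriv σ (B ::ₘ Δ) →
      SDeriv σ ((SFormula.tensor A B) ::ₘ (Γ + Δ))
  | parR {Γ} {A B : SFormula I T Atom} :
      SDeriv σ (A ::ₘ B ::ₘ Γ) → SDeriv σ ((SFormula.par A B) ::ₘ Γ)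
  | withR {Γ} {A B : SFormula I T Atom} :
      SDeriv σ (A ::ₘ Γ) → SDeriv σ (B ::ₘ Γ) →
      SDeriv σ ((SFormula.with' A B) ::ₘ Γ)
  | oplusR₁ {Γ} {A B : SFormula I T Atom} :
      SDeriv σ (A ::ₘ Γ) → SDeriv σ ((SFormula.oplus A B) ::ₘ Γ)
  | oplusR₂ {Γ} {A B : SFormula I T Atom} :
      SDeriv σ (B ::ₘ Γ) → SDeriv σ ((SFormula.oplus A B) ::ₘ Γ)
  | fexR {Γ} {f : T → SFormula I T Atom} (t : T) :
      SDeriv σ (f t ::ₘ Γ) → SDeriv σ ((SFormula.fex f) ::ₘ Γ)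
  | fallR {Γ} {f : T → SFormula I T Atom} :
      (∀ t, SDeriv σ (f t ::ₘ Γ)) → SDeriv σ ((SFormula.fall f) ::ₘ Γ)
  | questR {Γ} {a : I} {G : SFormula I T Atom} :
      SDeriv σ (G ::ₘ Γ) → SDeriv σ ((SFormula.squest a G) ::ₘ Γ)
  | bangR {Γ} {a : I} {G : SFormula I T Atom} :
      (∀ F ∈ Γ, ∃ b H, σ.le a b ∧ F = SFormula.squest b H) →
      SDeriv σ (G ::ₘ Γ) → SDeriv σ ((SFormula.sbang a G) ::ₘ Γ)
  | weak {Γ} {a : I} {G : SFormula I T Atom} :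
      a ∈ σ.U → SDeriv σ Γ → SDeriv σ ((SFormula.squest a G) ::ₘ Γ)
  | contr {Γ} {a : I} {G : SFormula I T Atom} :
      a ∈ σ.U →
      SDeriv σ ((SFormula.squest a G) ::ₘ (SFormula.squest a G) ::ₘ Γ) →
      SDeriv σ ((SFormula.squest a G) ::ₘ Γ)

/-- Two-sided sequents `Γ ⊢ Δ` are interpreted as the one-sided sequent
`⊢ Γ⊥, Δ`. -/
def STwoSided {I T Atom : Type} (σ : SellSig I)
    (Γ Δ : Multiset (SFormula I T Atom)) : Prop :=
  SDeriv σ (Γ.map SFormula.dual + Δ)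

section Aux
variable {I T Atom : Type}

private def SellQ (w : I) : SFormula I T Atom :=
  SFormula.squest w (SFormula.sbang w SFormula.top)

private def SellB (w : I) : SFormula I T Atom :=
  SFormula.sbang w SFormula.top

private lemma sell_no_bad (σ : SellSig I) (w : I)
    (Γ : Multiset (SFormula I T Atom)) (h : SDeriv σ Γ) :
    ¬ ((∀ F ∈ Γ, F = SellQ w ∨ F = SellB w ∨ F = SFormula.zero) ∧
        SFormula.zero ∈ Γ) := by
  induction h with
  | init a ts =>
      rintro ⟨hall, h0⟩
      simp [SellQ, SellB] at h0
  | oneR =>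
      rintro ⟨hall, h0⟩
      simp [SellQ, SellB] at h0
  | botR h ih =>
      rintro ⟨hall, h0⟩
      have := hall SFormula.bot (Multiset.mem_cons_self _ _)
      simp [SellQ, SellB] at this
  | topR Γ =>
      rintro ⟨hall, h0⟩
      have := hall SFormula.top (Multiset.mem_cons_self _ _)
      simp [SellQ, SellB] at this
  | tensorR h1 h2 ih1 ih2 =>
      rintro ⟨hall, h0⟩
      have := hall _ (Multiset.mem_cons_self _ _)
      simp [SellQ, SellB] at this
  | parR h ih =>
      rintro ⟨hall, h0⟩
      have := hall _ (Multiset.mem_cons_self _ _)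
      simp [SellQ, SellB] at this
  | withR h1 h2 ih1 ih2 =>
      rintro ⟨hall, h0⟩
      have := hall _ (Multiset.mem_cons_self _ _)
      simp [SellQ, SellB] at this
  | oplusR₁ h ih =>
      rintro ⟨hall, h0⟩
      have := hall _ (Multiset.mem_cons_self _ _)
      simp [SellQ, SellB] at this
  | oplusR₂ h ih =>
      rintro ⟨hall, h0⟩
      have := hall _ (Multiset.mem_cons_self _ _)
      simp [SellQ, SellB] at this
  | fexR t h ih =>
      rintro ⟨hall, h0⟩
      have := hall _ (Multiset.mem_cons_self _ _)
      simp [SellQ, SellB] at this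
  | fallR h ih =>
      rintro ⟨hall, h0⟩
      have := hall _ (Multiset.mem_cons_self _ _)
      simp [SellQ, SellB] at this
  | questR h ih =>
      rename_i Γ a G
      rintro ⟨hall, h0⟩
      have hq := hall _ (Multiset.mem_cons_self _ _)
      rcases hq with hq | hq | hq
      · -- squest a G = SellQ w, so a = w, G = SellB w
        simp only [SellQ, SFormula.squest.injEq] at hq
        obtain ⟨rfl, rfl⟩ := hq
        apply ih
        constructor
        · intro F hF
          rcases Multiset.mem_cons.1 hF with rfl | hF
          · right; left; rfl
          · exact hall F (Multiset.mem_cons_of_mem hF)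
        · apply Multiset.mem_cons_of_mem
          rcases Multiset.mem_cons.1 h0 with h0 | h0
          · exact absurd h0.symm (by simp [SellQ])
          · exact h0
      · simp [SellB] at hq
      · simp at hq
  | bangR hctx h ih =>
      rintro ⟨hall, h0⟩
      rcases Multiset.mem_cons.1 h0 with h0 | h0
      · exact absurd h0.symm (by simp)
      · obtain ⟨b, H, _, hEq⟩ := hctx _ h0
        simp at hEq
  | weak hU h ih =>
      rintro ⟨hall, h0⟩
      apply ih
      constructor
      · intro F hF; exact hall F (Multiset.mem_cons_of_mem hF)
      · rcases Multiset.mem_cons.1 h0 with h0 | h0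
        · exact absurd h0.symm (by simp [SellQ, SellB])
        · exact h0
  | contr hU h ih =>
      rename_i Γ a G
      rintro ⟨hall, h0⟩
      have hq := hall _ (Multiset.mem_cons_self _ _)
      apply ih
      constructor
      · intro F hF
        rcases Multiset.mem_cons.1 hF with rfl | hF
        · exact hq
        · rcases Multiset.mem_cons.1 hF with rfl | hF
          · exact hq
          · exact hall F (Multiset.mem_cons_of_mem hF)
      · apply Multiset.mem_cons_of_mem
        apply Multiset.mem_cons_of_mem
        rcases Multiset.mem_cons.1 h0 with h0 | h0
        · rcases hq with hq | hq | hq <;> simp [h0, SellQ, SellB] at hq ⊢ <;> simp_all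
        · exact h0

end Aux

/-- **Inconsistency is local in SELL.** For an unbounded subexponential
label `w`, the two-sided sequent `!^w ?^w 0 ⊢ 0` is not derivable. -/
theorem sell_inconsistency_is_local {I T Atom : Type} (σ : SellSig I)
    (w : I) (hw : w ∈ σ.U) :
    ¬ STwoSided σ {(SFormula.sbang w (SFormula.squest w (SFormula.zero))
                     : SFormula I T Atom)}
        {(SFormula.zero : SFormula I T Atom)} := by
  intro h
  apply sell_no_bad σ w _ h
  constructor
  · intro F hF
    simp [SFormula.dual] at hF
    rcases hF with hF | hF
    · left; simp [hF, SellQ, SFormula.dual]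
    · right; right; exact hF
  · show SFormula.zero ∈ Multiset.map _ _ + _
    simp
end

section
/- In Hybrid Linear Logic (HyLL), the satisfaction connective 'at' commutes with the multiplicative conjunction: for all formulas A, B and world expressions u, w, the sequents Γ; ((A ⊗ B) at u) @ w ⊢ ((A at u) ⊗ (B at u)) @ w and Γ; ((A at u) ⊗ (B at u)) @ w ⊢ ((A ⊗ B) at u) @ w are both derivable, i.e., (A ⊗ B) at u and (A at u) ⊗ (B at u) are provably equivalent. -/
/-- Identity is admissible for arbitrary formulas. -/
theorem HDeriv.ident {W T Atom : Type} (A : HFormula W T Atom) :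
    ∀ (Γ : Multiset (HJudg W T Atom)) (w : W), HDeriv Γ {(A, w)} (A, w) := by
  induction A with
  | atom a ts => intro Γ w; exact .init Γ a ts w
  | tensor A B ihA ihB =>
      intro Γ w
      apply HDeriv.tensorL
      have : ((A, w) ::ₘ (B, w) ::ₘ (0 : Multiset (HJudg W T Atom)))
          = ({(A, w)} : Multiset _) + {(B, w)} := by
        simp [Multiset.singleton_add]
      rw [this]
      exact .tensorR (ihA Γ w) (ihB Γ w)
  | one =>
      intro Γ w
      exact .oneL (.oneR Γ w)
  | limp A B ihA ihB =>
      intro Γ w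
      apply HDeriv.limpR
      have : ((A, w) ::ₘ ({(HFormula.limp A B, w)} : Multiset (HJudg W T Atom)))
          = (HFormula.limp A B, w) ::ₘ (({(A, w)} : Multiset _) + 0) := by
        rw [add_zero]; exact Multiset.cons_swap _ _ _
      rw [this]
      exact .limpL (ihA Γ w) (ihB Γ w)
  | with' A B ihA ihB =>
      intro Γ w
      exact .withR (.withL₁ (ihA Γ w)) (.withL₂ (ihB Γ w))
  | top => intro Γ w; exact .topR Γ _ w
  | oplus A B ihA ihB =>
      intro Γ w
      exact .oplusL (.oplusR₁ (ihA Γ w)) (.oplusR₂ (ihB Γ w))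
  | zero => intro Γ w; exact .zeroL Γ 0 w _
  | bang A ihA =>
      intro Γ w
      apply HDeriv.bangL
      apply HDeriv.bangR
      exact .copy (Multiset.mem_cons_self _ _) (ihA _ w)
  | fall f ih =>
      intro Γ w
      exact .fallR fun t => .fallL t (ih t Γ w)
  | fex f ih =>
      intro Γ w
      exact .fexL fun t => .fexR t (ih t Γ w)
  | at' A u ihA =>
      intro Γ w
      exact .atL (.atR (ihA Γ u))
  | down f ih =>
      intro Γ w
      exact .downL (.downR (ih w Γ w))
  | wall f ih =>
      intro Γ w
      exact .wallR fun v => .wallL v (ih v Γ w)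
  | wex f ih =>
      intro Γ w
      exact .wexL fun v => .wexR v (ih v Γ w)

/-- **`at` commutes with `⊗`.** In HyLL, for all formulas `A`, `B` and world
expressions `u`, `w`, the formulas `(A ⊗ B) at u` and `(A at u) ⊗ (B at u)`
are provably equivalent: each entails the other at any world `w`. -/
theorem hyll_at_tensor_commute {W T Atom : Type} [Monoid W]
    (Γ : Multiset (HJudg W T Atom)) (A B : HFormula W T Atom) (u w : W) :
    HDeriv Γ {(HFormula.at' (HFormula.tensor A B) u, w)}
      (HFormula.tensor (HFormula.at' A u) (HFormula.at' B u), w)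
    ∧
    HDeriv Γ {(HFormula.tensor (HFormula.at' A u) (HFormula.at' B u), w)}
      (HFormula.at' (HFormula.tensor A B) u, w) := by
  constructor
  · apply HDeriv.atL
    apply HDeriv.tensorL
    have : ((A, u) ::ₘ (B, u) ::ₘ (0 : Multiset (HJudg W T Atom)))
        = ({(A, u)} : Multiset _) + {(B, u)} := by
      simp [Multiset.singleton_add]
    rw [this]
    exact .tensorR (.atR (HDeriv.ident A Γ u)) (.atR (HDeriv.ident B Γ u))
  · apply HDeriv.tensorL
    apply HDeriv.atL
    have : ((A, u) ::ₘ (HFormula.at' B u, w) ::ₘ (0 : Multiset (HJudg W T Atom)))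
        = (HFormula.at' B u, w) ::ₘ (A, u) ::ₘ 0 := Multiset.cons_swap _ _ _
    rw [this]
    apply HDeriv.atL
    have : ((B, u) ::ₘ (A, u) ::ₘ (0 : Multiset (HJudg W T Atom)))
        = ({(A, u)} : Multiset _) + {(B, u)} := by
      rw [Multiset.cons_swap]; simp [Multiset.singleton_add]
    rw [this]
    exact .atR (.tensorR (HDeriv.ident A Γ u) (HDeriv.ident B Γ u))
end

section
/- In Hybrid Linear Logic (HyLL), the satisfaction connective 'at' commutes with linear implication: for all formulas A, B and world expressions u, w, the formulas (A ⊸ B) at u and (A at u) ⊸ (B at u) are provably equivalent, i.e., each entails the other at any world w in the HyLL sequent calculus. -/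
/-- General identity: `Γ; A @ w ⊢ A @ w` for every formula `A`. -/
lemma hyll_identity {W T Atom : Type} :
    ∀ (A : HFormula W T Atom) (Γ : Multiset (HJudg W T Atom)) (w : W),
      HDeriv Γ {(A, w)} (A, w) := by
  intro A
  induction A with
  | atom a ts => exact fun Γ w => HDeriv.init Γ a ts w
  | tensor A B ihA ihB =>
    intro Γ w
    apply HDeriv.tensorL
    have : ((A, w) ::ₘ (B, w) ::ₘ (0 : Multiset (HJudg W T Atom)))
        = ({(A, w)} : Multiset (HJudg W T Atom)) + {(B, w)} := by
      simp [Multiset.singleton_add]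
    rw [this]
    exact HDeriv.tensorR (ihA Γ w) (ihB Γ w)
  | one => intro Γ w; exact HDeriv.oneL (HDeriv.oneR Γ w)
  | limp A B ihA ihB =>
    intro Γ w
    apply HDeriv.limpR
    have : ((A, w) ::ₘ ({(HFormula.limp A B, w)} : Multiset (HJudg W T Atom)))
        = (HFormula.limp A B, w) ::ₘ (({(A, w)} : Multiset (HJudg W T Atom)) + 0) := by
      rw [add_zero]; exact Multiset.cons_swap _ _ _
    rw [this]
    exact HDeriv.limpL (ihA Γ w) (ihB Γ w)
  | with' A B ihA ihB =>
    intro Γ w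
    exact HDeriv.withR (HDeriv.withL₁ (ihA Γ w)) (HDeriv.withL₂ (ihB Γ w))
  | top => intro Γ w; exact HDeriv.topR _ _ _
  | oplus A B ihA ihB =>
    intro Γ w
    exact HDeriv.oplusL (HDeriv.oplusR₁ (ihA Γ w)) (HDeriv.oplusR₂ (ihB Γ w))
  | zero => intro Γ w; exact HDeriv.zeroL _ _ _ _
  | bang A ihA =>
    intro Γ w
    apply HDeriv.bangL
    apply HDeriv.bangR
    exact HDeriv.copy (Multiset.mem_cons_self _ _) (ihA _ w)
  | fall f ih =>
    intro Γ w
    exact HDeriv.fallR (fun t => HDeriv.fallL t (ih t Γ w))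
  | fex f ih =>
    intro Γ w
    exact HDeriv.fexL (fun t => HDeriv.fexR t (ih t Γ w))
  | at' A u ih =>
    intro Γ w
    exact HDeriv.atL (HDeriv.atR (ih Γ u))
  | down f ih =>
    intro Γ w
    exact HDeriv.downL (HDeriv.downR (ih w Γ w))
  | wall f ih =>
    intro Γ w
    exact HDeriv.wallR (fun v => HDeriv.wallL v (ih v Γ w))
  | wex f ih =>
    intro Γ w
    exact HDeriv.wexL (fun v => HDeriv.wexR v (ih v Γ w))

/-- **`at` commutes with `⊸`.** In HyLL, for all formulas `A`, `B` and world
expressions `u`, `w`, the formulas `(A ⊸ B) at u` and `(A at u) ⊸ (B at u)`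
are provably equivalent: each entails the other at any world `w`. -/
theorem hyll_at_limp_commute {W T Atom : Type} [Monoid W]
    (Γ : Multiset (HJudg W T Atom)) (A B : HFormula W T Atom) (u w : W) :
    HDeriv Γ {(HFormula.at' (HFormula.limp A B) u, w)}
      (HFormula.limp (HFormula.at' A u) (HFormula.at' B u), w)
    ∧
    HDeriv Γ {(HFormula.limp (HFormula.at' A u) (HFormula.at' B u), w)}
      (HFormula.at' (HFormula.limp A B) u, w) := by
  constructor
  · -- (A ⊸ B) at u ⊢ (A at u) ⊸ (B at u)
    apply HDeriv.limpR
    apply HDeriv.atR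
    have h : ((HFormula.at' A u, w) ::ₘ ({(HFormula.at' (HFormula.limp A B) u, w)} :
        Multiset (HJudg W T Atom)))
        = (HFormula.at' (HFormula.limp A B) u, w) ::ₘ {(HFormula.at' A u, w)} :=
      Multiset.cons_swap _ _ _
    rw [h]
    apply HDeriv.atL
    -- (A ⊸ B, u) ::ₘ {(A at u, w)} ⊢ (B, u)
    have h2 : ((HFormula.limp A B, u) ::ₘ ({(HFormula.at' A u, w)} :
        Multiset (HJudg W T Atom)))
        = (HFormula.limp A B, u) ::ₘ (({(HFormula.at' A u, w)} :
          Multiset (HJudg W T Atom)) + 0) := by simp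
    rw [h2]
    exact HDeriv.limpL (HDeriv.atL (hyll_identity A Γ u)) (hyll_identity B Γ u)
  · -- (A at u) ⊸ (B at u) ⊢ (A ⊸ B) at u
    apply HDeriv.atR
    apply HDeriv.limpR
    have h : ((A, u) ::ₘ ({(HFormula.limp (HFormula.at' A u) (HFormula.at' B u), w)} :
        Multiset (HJudg W T Atom)))
        = (HFormula.limp (HFormula.at' A u) (HFormula.at' B u), w) ::ₘ
          (({(A, u)} : Multiset (HJudg W T Atom)) + 0) := by
      rw [add_zero]; exact Multiset.cons_swap _ _ _
    rw [h]
    exact HDeriv.limpL (HDeriv.atR (hyll_identity A Γ u))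
      (HDeriv.atL (hyll_identity B Γ u))
end
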